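/- arXiv:0904.0144 — 6 statements merged into one kernel-verified Lean document; each statement's English description precedes it below -/
import Mathlib

section
/- Let Σ be a k×k positive definite correlation matrix, b ∈ ℝ^k \ (-∞,0]^k, b̃ the unique minimizer of the quadratic program min{xᵀΣ⁻¹x : x ≥ b} with active index set I. Then for every x ∈ ℝ^k, xᵀΣ⁻¹b̃ = x_Iᵀ(Σ_{II})⁻¹ b_I. -/
/-!
Since `bt_I = b_I` and `bt_J = Σ_{JI} (Σ_{II})⁻¹ b_I`, we have `bt = Σ v` for `v` the vector
`(Σ_{II})⁻¹ b_I` extended by zero outside `I`. Hence `Σ⁻¹ bt = v`, and pairing with `x`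
only sees the coordinates in `I`.
-/

open Matrix

namespace Matrix

variable {m n p R : Type*} [Fintype n] [Fintype p] [NonUnitalNonAssocSemiring R]

theorem dotProduct_extend_zero {e : p → n} (he : Function.Injective e) (x : n → R) (c : p → R) :
    x ⬝ᵥ Function.extend e c 0 = (x ∘ e) ⬝ᵥ c := by
  refine (Fintype.sum_of_injective e he _ _ (fun j hj => ?_) fun i => ?_).symm
  · rw [Function.extend_apply' _ _ _ hj, Pi.zero_apply, mul_zero]
  · rw [Function.comp_apply, he.extend_apply]

theorem mulVec_extend_zero {e : p → n} (he : Function.Injective e) (M : Matrix m n R)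
    (c : p → R) : M *ᵥ Function.extend e c 0 = M.submatrix id e *ᵥ c :=
  funext fun i => dotProduct_extend_zero he (M i) c

end Matrix

theorem quadratic_program_dot_identity_general
    {k : ℕ}
    (S : Matrix (Fin k) (Fin k) ℝ) (hS : S.PosDef)
    (b : Fin k → ℝ)
    (bt : Fin k → ℝ)
    (I : Finset (Fin k))
    (hactive : ∀ i ∈ I, bt i = b i)
    (hinactive : (fun j : {j // j ∉ I} => bt (j : Fin k)) =
      (S.submatrix (fun j : {j // j ∉ I} => (j : Fin k))
          (fun i : {i // i ∈ I} => (i : Fin k))) *ᵥ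
        ((S.submatrix (fun i : {i // i ∈ I} => (i : Fin k))
            (fun i : {i // i ∈ I} => (i : Fin k)))⁻¹ *ᵥ (fun i : {i // i ∈ I} => b i))) :
    ∀ x : Fin k → ℝ,
      x ⬝ᵥ S⁻¹ *ᵥ bt =
        (fun i : {i // i ∈ I} => x (i : Fin k)) ⬝ᵥ
          (S.submatrix (fun i : {i // i ∈ I} => (i : Fin k))
            (fun i : {i // i ∈ I} => (i : Fin k)))⁻¹ *ᵥ (fun i : {i // i ∈ I} => b i) := by
  intro x
  set A := S.submatrix (Subtype.val : I → Fin k) Subtype.val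
  set c := A⁻¹ *ᵥ fun i : I => b i
  have hAc : A *ᵥ c = fun i : I => b i := by
    rw [mulVec_mulVec, mul_nonsing_inv A
      ((isUnit_iff_isUnit_det A).1 (hS.submatrix Subtype.val_injective).isUnit), one_mulVec]
  have hSv : S *ᵥ Function.extend Subtype.val c 0 = bt := by
    rw [mulVec_extend_zero Subtype.val_injective]
    funext j
    by_cases hj : j ∈ I
    · exact (congrFun hAc ⟨j, hj⟩).trans (hactive j hj).symm
    · exact (congrFun hinactive ⟨j, hj⟩).symm
  have := hS.isUnit.invertible
  rw [inv_mulVec_eq_vec hSv.symm, dotProduct_extend_zero Subtype.val_injective]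
  rfl

/-- For the quadratic program `min xᵀΣ⁻¹x` over `{x ≥ b}` with minimizer `bt` and active
index set `I`, one has `xᵀΣ⁻¹bt = x_Iᵀ(Σ_{II})⁻¹ b_I` for every `x ∈ ℝ^k`. -/
theorem quadratic_program_dot_identity
    {k : ℕ} (hk : 2 ≤ k)
    (S : Matrix (Fin k) (Fin k) ℝ) (hS : S.PosDef)
    (hdiag : ∀ i, S i i = 1)
    (b : Fin k → ℝ) (hb : ∃ i, 0 < b i)
    (bt : Fin k → ℝ) (hbt_feas : ∀ i, b i ≤ bt i)
    (hbt_min : ∀ x : Fin k → ℝ, (∀ i, b i ≤ x i) →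
      bt ⬝ᵥ S⁻¹ *ᵥ bt ≤ x ⬝ᵥ S⁻¹ *ᵥ x)
    (I : Finset (Fin k)) (hI : I.Nonempty)
    (hactive : ∀ i ∈ I, bt i = b i)
    (hpos : ∀ i : {i // i ∈ I},
      0 < ((S.submatrix (fun i : {i // i ∈ I} => (i : Fin k))
            (fun i : {i // i ∈ I} => (i : Fin k)))⁻¹ *ᵥ (fun i : {i // i ∈ I} => b i)) i)
    (hinactive : (fun j : {j // j ∉ I} => bt (j : Fin k)) =
      (S.submatrix (fun j : {j // j ∉ I} => (j : Fin k))
          (fun i : {i // i ∈ I} => (i : Fin k))) *ᵥ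
        ((S.submatrix (fun i : {i // i ∈ I} => (i : Fin k))
            (fun i : {i // i ∈ I} => (i : Fin k)))⁻¹ *ᵥ (fun i : {i // i ∈ I} => b i))) :
    ∀ x : Fin k → ℝ,
      x ⬝ᵥ S⁻¹ *ᵥ bt =
        (fun i : {i // i ∈ I} => x (i : Fin k)) ⬝ᵥ
          (S.submatrix (fun i : {i // i ∈ I} => (i : Fin k))
            (fun i : {i // i ∈ I} => (i : Fin k)))⁻¹ *ᵥ (fun i : {i // i ∈ I} => b i) :=
  quadratic_program_dot_identity_general S hS b bt I hactive hinactive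
end

section
/- Let Σ be a k×k positive definite correlation matrix and c > 0. Then the active index set I of the quadratic program min{xᵀΣ⁻¹x : x ≥ c·1} (where 1 is the all-ones vector) satisfies |I| ≥ 2. -/
/-!
Write `g = Σ⁻¹ b̃`. Moving a single inactive coordinate `j` of `b̃` a little in either direction
keeps it feasible, so the derivative `2 gⱼ` of the objective along `eⱼ` vanishes: `g` is supported
on the active set. If that set were contained in `{i₀}`, then `b̃ = Σ g = g_{i₀} Σ e_{i₀}`. As
`b̃ ≠ 0`, `i₀` is active, so `g_{i₀} = c` by the unit diagonal, and for `j ≠ i₀` we would get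
`b̃ⱼ = c Σ_{j i₀} < c`, since off-diagonal entries of a positive definite correlation matrix are
below `1`.
-/

open Matrix Topology

theorem Matrix.IsSymm.add_smul_dotProduct_mulVec {ι : Type*} [Fintype ι] {A : Matrix ι ι ℝ}
    (hA : A.IsSymm) (x y : ι → ℝ) (t : ℝ) :
    (x + t • y) ⬝ᵥ A *ᵥ (x + t • y) = x ⬝ᵥ A *ᵥ x + t * (2 * (y ⬝ᵥ A *ᵥ x) + t * (y ⬝ᵥ A *ᵥ y)) := by
  have hswap : x ⬝ᵥ A *ᵥ y = y ⬝ᵥ A *ᵥ x := by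
    rw [dotProduct_mulVec, ← mulVec_transpose, hA.eq, dotProduct_comm]
  simp only [mulVec_add, mulVec_smul, dotProduct_add, add_dotProduct, smul_dotProduct,
    dotProduct_smul, smul_eq_mul, hswap]
  ring

theorem Matrix.IsSymm.dotProduct_mulVec_eq_zero_of_isLocalMin {ι : Type*} [Fintype ι]
    {A : Matrix ι ι ℝ} (hA : A.IsSymm) {x y : ι → ℝ}
    (hmin : IsLocalMin (fun t : ℝ => (x + t • y) ⬝ᵥ A *ᵥ (x + t • y)) 0) :
    y ⬝ᵥ A *ᵥ x = 0 := by
  rw [show (fun t : ℝ => (x + t • y) ⬝ᵥ A *ᵥ (x + t • y)) = _ from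
    funext (hA.add_smul_dotProduct_mulVec x y)] at hmin
  have hderiv := (((hasDerivAt_id' (0 : ℝ)).mul_const (y ⬝ᵥ A *ᵥ y)).const_add
    (2 * (y ⬝ᵥ A *ᵥ x)) |> (hasDerivAt_id' (0 : ℝ)).mul).const_add (x ⬝ᵥ A *ᵥ x)
  simp only [Pi.mul_apply, add_zero, one_mul, zero_mul] at hderiv
  linarith [hmin.hasDerivAt_eq_zero hderiv]

theorem Matrix.IsSymm.mulVec_apply_eq_zero_of_isMinOn_Ici {ι : Type*} [Fintype ι] [DecidableEq ι]
    {A : Matrix ι ι ℝ} (hA : A.IsSymm) {l b : ι → ℝ} (hb : l ≤ b)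
    (hmin : IsMinOn (fun x => x ⬝ᵥ A *ᵥ x) (Set.Ici l) b) {j : ι} (hj : l j < b j) :
    (A *ᵥ b) j = 0 := by
  have hline : ∀ᶠ t : ℝ in 𝓝 0, b + t • Pi.single j 1 ∈ Set.Ici l := by
    filter_upwards [Ioi_mem_nhds (sub_neg.2 hj)] with t ht i
    rcases eq_or_ne i j with rfl | hij
    · simp only [Pi.add_apply, Pi.smul_apply, Pi.single_eq_same, smul_eq_mul, mul_one]
      linarith [Set.mem_Ioi.1 ht]
    · simpa [Pi.single_eq_of_ne hij] using hb i
  have hloc :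
      IsLocalMin (fun t : ℝ => (b + t • Pi.single j 1) ⬝ᵥ A *ᵥ (b + t • Pi.single j 1)) 0 :=
    hline.mono fun t ht => by simpa using hmin ht
  simpa [single_dotProduct] using hA.dotProduct_mulVec_eq_zero_of_isLocalMin hloc

theorem Matrix.PosDef.two_mul_apply_lt_add {ι : Type*} [Fintype ι] [DecidableEq ι]
    {S : Matrix ι ι ℝ} (hS : S.PosDef) {i j : ι} (hij : i ≠ j) :
    2 * S i j < S i i + S j j := by
  have hne : Pi.single i 1 - Pi.single j 1 ≠ (0 : ι → ℝ) := by
    intro h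
    simpa [Pi.single_eq_of_ne hij] using congrFun h i
  have hsymm : S j i = S i j := (isHermitian_iff_isSymm.1 hS.isHermitian).apply i j
  have := hS.dotProduct_mulVec_pos hne
  simp only [star_trivial, mulVec_sub, mulVec_single_one, sub_dotProduct, dotProduct_sub,
    single_dotProduct, col_apply, one_mul, hsymm] at this
  linarith

theorem Matrix.apply_eq_mul_of_inv_mulVec_eq_single {ι : Type*} [Fintype ι] [DecidableEq ι]
    {S : Matrix ι ι ℝ} (hS : IsUnit S.det) {b : ι → ℝ} {i : ι} {a : ℝ}
    (h : S⁻¹ *ᵥ b = Pi.single i a) (j : ι) : b j = S j i * a := by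
  rw [← one_mulVec b, ← mul_nonsing_inv S hS, ← mulVec_mulVec, h, mulVec_single]
  rfl

/-- If the constraint vector of the quadratic program `min xᵀΣ⁻¹x : x ≥ c·1` (with `c > 0`
and `Σ` a positive definite correlation matrix) is constant, then the active index set of
the unique minimizer has at least two elements. -/
theorem quadratic_program_constant_threshold_active_card
    {k : ℕ} (hk : 2 ≤ k)
    (S : Matrix (Fin k) (Fin k) ℝ) (hS : S.PosDef)
    (hdiag : ∀ i, S i i = 1)
    (c : ℝ) (hc : 0 < c)
    (bt : Fin k → ℝ) (hbt_feas : ∀ i, c ≤ bt i)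
    (hbt_min : ∀ x : Fin k → ℝ, (∀ i, c ≤ x i) →
      bt ⬝ᵥ S⁻¹ *ᵥ bt ≤ x ⬝ᵥ S⁻¹ *ᵥ x) :
    2 ≤ (Finset.univ.filter (fun i => bt i = c)).card := by
  have : Nontrivial (Fin k) := Fin.nontrivial_iff_two_le.mpr hk
  by_contra! hcard
  obtain ⟨i₀, hi₀⟩ := Finset.card_le_one_iff_subset_singleton.1 (Nat.le_of_lt_succ hcard)
  set g := S⁻¹ *ᵥ bt
  have hkkt : ∀ j, c < bt j → g j = 0 := fun j =>
    (isHermitian_iff_isSymm.1 hS.inv.isHermitian).mulVec_apply_eq_zero_of_isMinOn_Ici hbt_feas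
      (fun x hx => hbt_min x hx)
  have hg : g = Pi.single i₀ (g i₀) := by
    ext j
    rcases eq_or_ne j i₀ with rfl | hj
    · simp
    · rw [Pi.single_eq_of_ne hj]
      refine hkkt j <| (hbt_feas j).lt_of_ne fun h => hj ?_
      simpa using hi₀ (Finset.mem_filter.2 ⟨Finset.mem_univ j, h.symm⟩)
  have hbt := apply_eq_mul_of_inv_mulVec_eq_single ((isUnit_iff_isUnit_det S).1 hS.isUnit) hg
  have hactive : bt i₀ = c := by
    by_contra h
    have hzero := hbt i₀
    rw [hkkt i₀ ((hbt_feas i₀).lt_of_ne (Ne.symm h)), mul_zero] at hzero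
    linarith [hbt_feas i₀]
  obtain ⟨j, hj⟩ := exists_ne i₀
  have hcorr := hS.two_mul_apply_lt_add hj
  nlinarith [hbt j, hbt i₀, hbt_feas j, hdiag i₀, hdiag j]
end

section
/- Let Σ = ρ·11ᵀ + (1-ρ)E be the equicorrelation matrix with ρ ∈ (-1/(k-1),1), and the all-ones constraint vector. Since Σ⁻¹1 > 0, the unique solution of min{xᵀΣ⁻¹x : x ≥ 1} is the all-ones vector 1, with minimal index set I = {1,…,k}. -/
/-!
Write `x = u + d` with `d ≥ 0`. For a symmetric `A`,
`xᵀAx = uᵀAu + 2 dᵀ(Au) + dᵀAd`; if `Au ≥ 0` the middle term is nonnegative, and if `A` is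
positive definite the last one vanishes only for `d = 0`. So `u` is the unique minimiser of `xᵀAx`
over `{x ≥ u}`. For the equicorrelation matrix `Σ`, `Σ 1 = (1 + (k-1)ρ) 1` with
`1 + (k-1)ρ > 0`, so `A = Σ⁻¹` is positive definite with `A 1 = (1 + (k-1)ρ)⁻¹ 1 ≥ 0`.
-/

open Matrix

namespace Matrix

section QuadraticForm

variable {n : Type*} [Fintype n]

theorem dotProduct_mulVec_add_self {A : Matrix n n ℝ} (hA : A.IsHermitian) (u d : n → ℝ) :
    (u + d) ⬝ᵥ A *ᵥ (u + d) = u ⬝ᵥ A *ᵥ u + 2 * (d ⬝ᵥ A *ᵥ u) + d ⬝ᵥ A *ᵥ d := by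
  have hsymm : u ⬝ᵥ A *ᵥ d = d ⬝ᵥ A *ᵥ u := by
    rw [dotProduct_mulVec, ← mulVec_transpose, ← conjTranspose_eq_transpose_of_trivial, hA.eq,
      dotProduct_comm]
  simp only [mulVec_add, dotProduct_add, add_dotProduct, hsymm]
  ring

theorem dotProduct_mulVec_le_of_le {A : Matrix n n ℝ} (hA : A.PosSemidef) {u x : n → ℝ}
    (hAu : 0 ≤ A *ᵥ u) (hux : u ≤ x) : u ⬝ᵥ A *ᵥ u ≤ x ⬝ᵥ A *ᵥ x := by
  obtain ⟨d, hd, rfl⟩ : ∃ d, 0 ≤ d ∧ x = u + d := ⟨x - u, sub_nonneg.mpr hux, by abel⟩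
  have hcross : 0 ≤ d ⬝ᵥ A *ᵥ u := dotProduct_nonneg_of_nonneg hd hAu
  have hquad : 0 ≤ d ⬝ᵥ A *ᵥ d := by simpa using hA.dotProduct_mulVec_nonneg d
  rw [dotProduct_mulVec_add_self hA.isHermitian]
  linarith

theorem eq_of_le_of_dotProduct_mulVec_eq {A : Matrix n n ℝ} (hA : A.PosDef) {u x : n → ℝ}
    (hAu : 0 ≤ A *ᵥ u) (hux : u ≤ x) (heq : x ⬝ᵥ A *ᵥ x = u ⬝ᵥ A *ᵥ u) : x = u := by
  obtain ⟨d, hd, rfl⟩ : ∃ d, 0 ≤ d ∧ x = u + d := ⟨x - u, sub_nonneg.mpr hux, by abel⟩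
  have hcross : 0 ≤ d ⬝ᵥ A *ᵥ u := dotProduct_nonneg_of_nonneg hd hAu
  by_contra hne
  have hquad : 0 < d ⬝ᵥ A *ᵥ d := by
    simpa using hA.dotProduct_mulVec_pos (x := d) (by rintro rfl; simp at hne)
  rw [dotProduct_mulVec_add_self hA.isHermitian] at heq
  linarith

end QuadraticForm

section Equicorrelation

variable {n : Type*} [Fintype n] [DecidableEq n]

def equicorrelation (n : Type*) [DecidableEq n] (ρ : ℝ) : Matrix n n ℝ :=
  ρ • of (fun _ _ => 1) + (1 - ρ) • 1

variable {ρ : ℝ}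

theorem equicorrelation_mulVec (x : n → ℝ) :
    equicorrelation n ρ *ᵥ x = ρ • (fun _ => ∑ i, x i) + (1 - ρ) • x := by
  rw [equicorrelation, add_mulVec, smul_mulVec, smul_mulVec, one_mulVec]
  congr
  ext
  simp [mulVec, dotProduct]

theorem equicorrelation_mulVec_one :
    equicorrelation n ρ *ᵥ 1 = (1 + (Fintype.card n - 1) * ρ) • 1 := by
  ext i
  simp only [equicorrelation_mulVec, Pi.add_apply, Pi.smul_apply, Pi.one_apply, smul_eq_mul,
    Finset.sum_const, Finset.card_univ, nsmul_eq_mul]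
  ring

theorem dotProduct_equicorrelation_mulVec (x : n → ℝ) :
    x ⬝ᵥ equicorrelation n ρ *ᵥ x = ρ * (∑ i, x i) ^ 2 + (1 - ρ) * (x ⬝ᵥ x) := by
  rw [equicorrelation_mulVec, dotProduct_add, dotProduct_smul, dotProduct_smul, smul_eq_mul,
    smul_eq_mul, sq]
  congr 2
  simp [dotProduct, Finset.sum_mul]

omit [Fintype n] in
theorem isHermitian_equicorrelation : (equicorrelation n ρ).IsHermitian := by
  ext i j
  simp [equicorrelation, one_apply, eq_comm]

theorem equicorrelation_posDef (hρ : ρ < 1) (hc : 0 < 1 + (Fintype.card n - 1) * ρ) :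
    (equicorrelation n ρ).PosDef := by
  refine .of_dotProduct_mulVec_pos isHermitian_equicorrelation fun x hx => ?_
  have hq : 0 < x ⬝ᵥ x := by simpa using dotProduct_star_self_pos_iff.mpr hx
  have hcs : (∑ i, x i) ^ 2 ≤ Fintype.card n * (x ⬝ᵥ x) := by
    simpa [dotProduct, sq] using sq_sum_le_card_mul_sum_sq (s := Finset.univ) (f := x)
  rw [star_trivial, dotProduct_equicorrelation_mulVec]
  -- the form is at least `(1 - ρ) ‖x‖²` if `ρ ≥ 0`, and at least `(1 + (k-1)ρ) ‖x‖²` if `ρ < 0`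
  rcases le_or_gt 0 ρ with hρ0 | hρ0
  · nlinarith [sq_nonneg (∑ i, x i)]
  · nlinarith

theorem equicorrelation_inv_mulVec_one (hρ : ρ < 1) (hc : 0 < 1 + (Fintype.card n - 1) * ρ) :
    (equicorrelation n ρ)⁻¹ *ᵥ 1 = (1 + (Fintype.card n - 1) * ρ)⁻¹ • 1 := by
  have := (equicorrelation_posDef hρ hc).isUnit.invertible
  refine inv_mulVec_eq_vec ?_
  rw [mulVec_smul, equicorrelation_mulVec_one, smul_smul, inv_mul_cancel₀ hc.ne', one_smul]

end Equicorrelation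

end Matrix

/-- For the equicorrelation matrix `Σ` with `ρ ∈ (-1/(k-1),1)`, the all-ones vector is the
unique solution of `min xᵀΣ⁻¹x` over `{x : x ≥ 1}` (the minimal index set is `{1,…,k}`). -/
theorem equicorrelation_qp_solution_is_ones
    {k : ℕ} (hk : 2 ≤ k) (ρ : ℝ)
    (hρ1 : -1 / ((k : ℝ) - 1) < ρ) (hρ2 : ρ < 1)
    (S : Matrix (Fin k) (Fin k) ℝ)
    (hSdef : S = ρ • (Matrix.of fun _ _ => (1 : ℝ)) + (1 - ρ) • (1 : Matrix (Fin k) (Fin k) ℝ)) :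
    (∀ x : Fin k → ℝ, (∀ i, (1 : ℝ) ≤ x i) →
      (fun _ => (1 : ℝ)) ⬝ᵥ S⁻¹ *ᵥ (fun _ => (1 : ℝ)) ≤ x ⬝ᵥ S⁻¹ *ᵥ x) ∧
    (∀ x : Fin k → ℝ, (∀ i, (1 : ℝ) ≤ x i) →
      x ⬝ᵥ S⁻¹ *ᵥ x = (fun _ => (1 : ℝ)) ⬝ᵥ S⁻¹ *ᵥ (fun _ => (1 : ℝ)) →
      x = fun _ => (1 : ℝ)) := by
  have hS : S = equicorrelation (Fin k) ρ := hSdef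
  have hk1 : (0 : ℝ) < k - 1 := by
    have : (2 : ℝ) ≤ k := by exact_mod_cast hk
    linarith
  have hc : 0 < 1 + (Fintype.card (Fin k) - 1) * ρ := by
    have := (div_lt_iff₀ hk1).mp hρ1
    rw [Fintype.card_fin]
    linarith
  have hA : S⁻¹.PosDef := hS ▸ (equicorrelation_posDef hρ2 hc).inv
  have hAu : 0 ≤ S⁻¹ *ᵥ 1 := by
    rw [hS, equicorrelation_inv_mulVec_one hρ2 hc]
    exact smul_nonneg (inv_nonneg.mpr hc.le) zero_le_one
  exact ⟨fun x hx => dotProduct_mulVec_le_of_le hA.posSemidef hAu hx,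
    fun x hx heq => eq_of_le_of_dotProduct_mulVec_eq hA hAu hx heq⟩
end

section
/- Let B = C ᵀC be a positive definite k×k matrix with C its lower-triangular Cholesky factor, and suppose B = E/(1-ρ) - ρ·11ᵀ/((1-ρ)(1+(k-1)ρ)) is the inverse of an equicorrelation matrix with ρ ∈ (-1/(k-1),1). Then in each row i of C the off-diagonal entries to the left of the diagonal are all equal: c_{i1} = c_{i2} = … = c_{i,i-1}, and c_{ii} + (i-1)c_{i1} > 0 for every i. -/
open Matrix

/-!
Write `B = CᵀC`. As `C` is lower triangular, `B i j - B i j' = C i i * (C i j - C i j')` as soon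
as all rows of `C` below row `i` agree in columns `j` and `j'`. The off-diagonal entries of `B` are
all equal, so downward induction on `i` makes every row of `C` constant left of the diagonal;
comparing `B i i` with `B i 0` then gives `C i i * (C i i - C i 0) = 1 / (1 - ρ) > 0`.

For the positivity, `y = C 1` has entries `C i i + i * C i 0` and solves the triangular system
`Cᵀ y = B 1 = (1 + (k - 1) ρ)⁻¹ • 1`. Its last equation gives `y (k - 1) > 0`, and subtracting
consecutive equations gives `C i i * y i = (C (i + 1) (i + 1) - C (i + 1) 0) * y (i + 1)`, so
positivity propagates upwards.
-/

namespace Matrix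

def IsRowConstLeftOfDiag {ι R : Type*} [LT ι] (C : Matrix ι ι R) : Prop :=
  ∀ i j j', j < i → j' < i → C i j = C i j'

section Gram

variable {ι R : Type*} [Fintype ι] [LinearOrder ι] [CommRing R] {C : Matrix ι ι R}

theorem transpose_mul_self_apply_sub (hlow : ∀ i j, i < j → C i j = 0) {i j j' : ι}
    (hbelow : ∀ m, i < m → C m j = C m j') :
    (Cᵀ * C) i j - (Cᵀ * C) i j' = C i i * (C i j - C i j') := by
  simp only [mul_apply, transpose_apply, ← Finset.sum_sub_distrib, ← mul_sub]
  refine Finset.sum_eq_single i (fun m _ hmi => ?_) (by simp)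
  rcases hmi.lt_or_gt with hmi | hmi
  · rw [hlow m i hmi, zero_mul]
  · rw [hbelow m hmi, sub_self, mul_zero]

theorem IsRowConstLeftOfDiag.of_transpose_mul_self [IsDomain R]
    (hlow : ∀ i j, i < j → C i j = 0) (hdiag : ∀ i, C i i ≠ 0)
    (hgram : (Cᵀ * C).IsRowConstLeftOfDiag) : C.IsRowConstLeftOfDiag := by
  intro i
  induction i using WellFoundedGT.induction with
  | _ i ih =>
    intro j j' hj hj'
    have hdiff := transpose_mul_self_apply_sub hlow
      (fun m hm => ih m hm j j' (hj.trans hm) (hj'.trans hm))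
    rw [hgram i j j' hj hj', sub_self, eq_comm, mul_eq_zero] at hdiff
    exact sub_eq_zero.mp (hdiff.resolve_left (hdiag i))

end Gram

section Fin

variable {n : ℕ} {R : Type*} [CommRing R] {C : Matrix (Fin (n + 1)) (Fin (n + 1)) R}

theorem mulVec_one_apply_of_isRowConstLeftOfDiag (hlow : ∀ i j, i < j → C i j = 0)
    (hrows : C.IsRowConstLeftOfDiag) (i : Fin (n + 1)) :
    (C *ᵥ 1) i = C i i + (i : ℕ) * C i 0 := by
  have hIic : ∑ j ∈ Finset.Iic i, C i j = ∑ j, C i j :=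
    Finset.sum_subset (Finset.subset_univ _) fun j _ hj =>
      hlow i j (not_le.mp (by simpa using hj))
  have hIio : ∑ j ∈ Finset.Iio i, C i j = ∑ _j ∈ Finset.Iio i, C i 0 :=
    Finset.sum_congr rfl fun j hj =>
      hrows i j 0 (Finset.mem_Iio.mp hj) ((Fin.zero_le j).trans_lt (Finset.mem_Iio.mp hj))
  rw [mulVec, dotProduct_one, ← hIic, ← Finset.Iio_insert, Finset.sum_insert (by simp), hIio,
    Finset.sum_const, Fin.card_Iio, nsmul_eq_mul]

theorem transpose_mulVec_last (hlow : ∀ i j, i < j → C i j = 0) (v : Fin (n + 1) → R) :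
    (Cᵀ *ᵥ v) (Fin.last n) = C (Fin.last n) (Fin.last n) * v (Fin.last n) := by
  rw [mulVec, dotProduct]
  refine Finset.sum_eq_single _ (fun m _ hm => ?_) (by simp)
  rw [transpose_apply, hlow m _ (lt_of_le_of_ne (Fin.le_last m) hm), zero_mul]

theorem transpose_mulVec_castSucc_sub_succ (hlow : ∀ i j, i < j → C i j = 0)
    (hrows : C.IsRowConstLeftOfDiag) (v : Fin (n + 1) → R) (i : Fin n) :
    (Cᵀ *ᵥ v) i.castSucc - (Cᵀ *ᵥ v) i.succ =
      C i.castSucc i.castSucc * v i.castSucc -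
        (C i.succ i.succ - C i.succ i.castSucc) * v i.succ := by
  have hlt : i.castSucc < i.succ := Fin.castSucc_lt_succ
  simp only [mulVec, dotProduct, transpose_apply, ← Finset.sum_sub_distrib, ← sub_mul]
  rw [Fintype.sum_eq_add i.castSucc i.succ hlt.ne, hlow _ _ hlt]
  · ring
  rintro m ⟨hm₁, hm₂⟩
  rcases lt_or_gt_of_ne hm₁ with hm | hm
  · rw [hlow m _ hm, hlow m _ (hm.trans hlt), sub_self, zero_mul]
  · have hm' : i.succ < m := lt_of_le_of_ne (Fin.castSucc_lt_iff_succ_le.mp hm) (Ne.symm hm₂)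
    rw [hrows m _ _ hm hm', sub_self, zero_mul]

end Fin

theorem pos_of_transpose_mulVec_eq_const {n : ℕ} {R : Type*} [CommRing R] [LinearOrder R]
    [IsStrictOrderedRing R] {C : Matrix (Fin (n + 1)) (Fin (n + 1)) R}
    (hlow : ∀ i j, i < j → C i j = 0)
    (hrows : C.IsRowConstLeftOfDiag) (hdiag : ∀ i, 0 < C i i)
    (hgap : ∀ i j, j < i → C i j < C i i) {v : Fin (n + 1) → R} {s : R} (hs : 0 < s)
    (hv : ∀ i, (Cᵀ *ᵥ v) i = s) (i : Fin (n + 1)) : 0 < v i := by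
  induction i using Fin.reverseInduction with
  | last =>
    have h := hv (Fin.last n)
    rw [transpose_mulVec_last hlow] at h
    exact pos_of_mul_pos_right (h ▸ hs) (hdiag _).le
  | cast i ih =>
    have h := transpose_mulVec_castSucc_sub_succ hlow hrows v i
    rw [hv, hv, sub_self, eq_comm, sub_eq_zero] at h
    have hgap' := sub_pos.mpr (hgap i.succ i.castSucc Fin.castSucc_lt_succ)
    exact pos_of_mul_pos_right (h ▸ mul_pos hgap' ih) (hdiag _).le

end Matrix

theorem one_add_sub_one_mul_pos {k : ℕ} {ρ : ℝ} (hk : 2 ≤ k) (hρ : -1 / ((k : ℝ) - 1) < ρ) :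
    0 < 1 + ((k : ℝ) - 1) * ρ := by
  have hk1 : (0 : ℝ) < (k : ℝ) - 1 := by
    have : (2 : ℝ) ≤ k := by exact_mod_cast hk
    linarith
  rw [div_lt_iff₀ hk1] at hρ
  linarith

theorem equicorrelation_inv_row_sum {k ρ : ℝ} (hρ : 1 - ρ ≠ 0) (hkρ : 1 + (k - 1) * ρ ≠ 0) :
    (1 - ρ)⁻¹ - k * (ρ / ((1 - ρ) * (1 + (k - 1) * ρ))) = (1 + (k - 1) * ρ)⁻¹ := by
  rw [div_eq_mul_inv, mul_inv]
  linear_combination (-(1 - ρ)⁻¹) * mul_inv_cancel₀ hkρ + (1 + (k - 1) * ρ)⁻¹ * inv_mul_cancel₀ hρ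

/-- For the Cholesky factor `C` (lower triangular with positive diagonal, `CᵀC = B`) of the
inverse `B` of an equicorrelation matrix, in each row the entries to the left of the
diagonal are all equal, and `c_{ii} + (i-1) c_{i1} > 0` for every row `i`. -/
theorem cholesky_equicorrelation_inverse_rows
    {k : ℕ} (hk : 2 ≤ k) (ρ : ℝ)
    (hρ1 : -1 / ((k : ℝ) - 1) < ρ) (hρ2 : ρ < 1)
    (B : Matrix (Fin k) (Fin k) ℝ)
    (hBdef : B = (1 - ρ)⁻¹ • (1 : Matrix (Fin k) (Fin k) ℝ) -
      (ρ / ((1 - ρ) * (1 + ((k : ℝ) - 1) * ρ))) • (Matrix.of fun _ _ => (1 : ℝ)))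
    (C : Matrix (Fin k) (Fin k) ℝ)
    (hlow : ∀ i j : Fin k, i < j → C i j = 0)
    (hdiagpos : ∀ i, 0 < C i i)
    (hchol : Cᵀ * C = B) :
    (∀ i j j' : Fin k, j < i → j' < i → C i j = C i j') ∧
    (∀ i : Fin k, 0 < C i i + (i : ℕ) * C i ⟨0, by omega⟩) := by
  have h1ρ : 0 < 1 - ρ := by linarith
  have hkρ := one_add_sub_one_mul_pos hk hρ1
  have hs := equicorrelation_inv_row_sum h1ρ.ne' hkρ.ne'
  set a := (1 - ρ)⁻¹
  set c := ρ / ((1 - ρ) * (1 + ((k : ℝ) - 1) * ρ))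
  have hB : ∀ i j, B i j = (if i = j then a else 0) - c := by
    intro i j
    by_cases h : i = j <;> simp [hBdef, one_apply, h]
  have hrows : C.IsRowConstLeftOfDiag := by
    refine IsRowConstLeftOfDiag.of_transpose_mul_self hlow (fun i => (hdiagpos i).ne') ?_
    intro i j j' hj hj'
    rw [hchol, hB, hB, if_neg hj.ne', if_neg hj'.ne']
  have hgap : ∀ i j, j < i → C i j < C i i := by
    intro i j hj
    have h := transpose_mul_self_apply_sub hlow (fun m hm => hrows m i j hm (hj.trans hm))
    rw [hchol, hB, hB, if_pos rfl, if_neg hj.ne', sub_sub_sub_cancel_right, sub_zero] at h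
    exact sub_pos.mp (pos_of_mul_pos_right (h ▸ inv_pos.mpr h1ρ) (hdiagpos i).le)
  have hv : ∀ i, (Cᵀ *ᵥ (C *ᵥ 1)) i = a - k * c := by
    intro i
    rw [mulVec_mulVec, hchol]
    simp [mulVec, dotProduct, hB, Finset.sum_sub_distrib]
  obtain ⟨n, rfl⟩ : ∃ n, k = n + 1 := ⟨k - 1, by omega⟩
  refine ⟨hrows, fun i => ?_⟩
  have hpos := pos_of_transpose_mulVec_eq_const hlow hrows hdiagpos hgap
    (hs ▸ inv_pos.mpr hkρ) hv i
  rwa [mulVec_one_apply_of_isRowConstLeftOfDiag hlow hrows] at hpos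
end

section
/- Let α₁, α₂ > 0 and let g: (0,∞) → (0,∞) be measurable with (Γ(α₁)Γ(α₂)/Γ(α₁+α₂))·∫₀^∞ g(x)x^{α₁+α₂-1}dx = 1. Then the function h(x₁,x₂) = g(x₁²+x₂²)·|x₁|^{2α₁-1}|x₂|^{2α₂-1} is a probability density on ℝ². -/
/-!
In polar coordinates the integrand factors into a radial part, which the substitution `x = r²`
turns into `½ ∫₀^∞ g(x) x^{α₁+α₂-1} dx`, times an angular integral
`A = ∫_{-π}^{π} |cos θ|^{2α₁-1} |sin θ|^{2α₂-1} dθ` independent of `g`. Instead of computing `A` as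
a Beta integral, evaluate the same factorisation for the Gaussian generator `g(x) = e^{-x}`: there
Fubini also splits the integral as `Γ(α₁)Γ(α₂)`, while the radial part is `Γ(α₁+α₂)/2`, so
`A = 2Γ(α₁)Γ(α₂)/Γ(α₁+α₂)`.
-/

open MeasureTheory Real Set

theorem integral_Ioi_comp_sq_mul_rpow (f : ℝ → ℝ) (s : ℝ) :
    ∫ r in Ioi 0, f (r ^ 2) * r ^ (2 * s - 1) = (1 / 2) * ∫ x in Ioi 0, f x * x ^ (s - 1) := by
  rw [← integral_comp_rpow_Ioi_of_pos (g := fun x => f x * x ^ (s - 1)) two_pos,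
    ← integral_const_mul]
  refine setIntegral_congr_fun measurableSet_Ioi fun r (hr : 0 < r) => ?_
  have hpow : r ^ (2 * s - 1) = r ^ ((2 : ℝ) - 1) * (r ^ (2 : ℝ)) ^ (s - 1) := by
    rw [← rpow_mul hr.le, ← rpow_add hr]; ring_nf
  rw [smul_eq_mul, hpow, rpow_two]
  ring

theorem integral_comp_sq_add_sq_mul_abs_rpow_eq_radial_mul_angular (f : ℝ → ℝ) (a b : ℝ) :
    ∫ p : ℝ × ℝ, f (p.1 ^ 2 + p.2 ^ 2) * |p.1| ^ (2 * a - 1) * |p.2| ^ (2 * b - 1) =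
      (∫ r in Ioi (0 : ℝ), f (r ^ 2) * r ^ (2 * (a + b) - 1)) *
        ∫ θ in Ioo (-π) π, |cos θ| ^ (2 * a - 1) * |sin θ| ^ (2 * b - 1) := by
  rw [← integral_comp_polarCoord_symm, polarCoord_target, ← integral_prod_mul,
    Measure.prod_restrict, ← Measure.volume_eq_prod]
  refine setIntegral_congr_fun (measurableSet_Ioi.prod measurableSet_Ioo) ?_
  rintro ⟨r, θ⟩ ⟨hr : 0 < r, -⟩
  have hsq : (r * cos θ) ^ 2 + (r * sin θ) ^ 2 = r ^ 2 := by
    linear_combination r ^ 2 * sin_sq_add_cos_sq θ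
  have hpow : r ^ (2 * (a + b) - 1) = r * (r ^ (2 * a - 1) * r ^ (2 * b - 1)) := by
    rw [show 2 * (a + b) - 1 = 1 + ((2 * a - 1) + (2 * b - 1)) by ring, rpow_add hr,
      rpow_add hr, rpow_one]
  simp only [polarCoord_symm_apply, smul_eq_mul, hsq, abs_mul, abs_of_pos hr,
    mul_rpow hr.le (abs_nonneg _), hpow]
  ring

theorem integral_exp_neg_sq_mul_abs_rpow {a : ℝ} (ha : 0 < a) :
    ∫ x : ℝ, exp (-x ^ 2) * |x| ^ (2 * a - 1) = Gamma a := by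
  have heven := integral_comp_abs (f := fun x => exp (-x ^ 2) * x ^ (2 * a - 1))
  simp only [sq_abs] at heven
  rw [heven, integral_Ioi_comp_sq_mul_rpow (fun x => exp (-x)), ← Gamma_eq_integral ha]
  ring

theorem Gamma_add_mul_integral_abs_cos_rpow_mul_abs_sin_rpow {a b : ℝ} (ha : 0 < a) (hb : 0 < b) :
    Gamma (a + b) * ∫ θ in Ioo (-π) π, |cos θ| ^ (2 * a - 1) * |sin θ| ^ (2 * b - 1) =
      2 * (Gamma a * Gamma b) := by
  have hpolar :=
    integral_comp_sq_add_sq_mul_abs_rpow_eq_radial_mul_angular (fun x => exp (-x)) a b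
  have hfubini :
      ∫ p : ℝ × ℝ, exp (-(p.1 ^ 2 + p.2 ^ 2)) * |p.1| ^ (2 * a - 1) * |p.2| ^ (2 * b - 1) =
        Gamma a * Gamma b := by
    rw [← integral_exp_neg_sq_mul_abs_rpow ha, ← integral_exp_neg_sq_mul_abs_rpow hb,
      ← integral_prod_mul, ← Measure.volume_eq_prod]
    congr 1 with p
    rw [neg_add, exp_add]
    ring
  rw [hfubini, integral_Ioi_comp_sq_mul_rpow (fun x => exp (-x)),
    ← Gamma_eq_integral (by positivity)] at hpolar
  linear_combination -2 * hpolar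

theorem integral_comp_sq_add_sq_mul_abs_rpow (f : ℝ → ℝ) {a b : ℝ} (ha : 0 < a) (hb : 0 < b) :
    ∫ p : ℝ × ℝ, f (p.1 ^ 2 + p.2 ^ 2) * |p.1| ^ (2 * a - 1) * |p.2| ^ (2 * b - 1) =
      Gamma a * Gamma b / Gamma (a + b) * ∫ x in Ioi 0, f x * x ^ (a + b - 1) := by
  have hΓ : Gamma (a + b) ≠ 0 := (Gamma_pos_of_pos (by positivity)).ne'
  rw [integral_comp_sq_add_sq_mul_abs_rpow_eq_radial_mul_angular, integral_Ioi_comp_sq_mul_rpow,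
    div_mul_eq_mul_div (Gamma a * Gamma b), eq_div_iff hΓ]
  linear_combination (∫ x in Ioi 0, f x * x ^ (a + b - 1)) / 2 *
    Gamma_add_mul_integral_abs_cos_rpow_mul_abs_sin_rpow ha hb

theorem dirichlet_density_generator_normalization_general
    (α₁ α₂ : ℝ) (hα₁ : 0 < α₁) (hα₂ : 0 < α₂)
    (g : ℝ → ℝ)
    (hg_nonneg : ∀ x, 0 ≤ g x)
    (hnorm : (Real.Gamma α₁ * Real.Gamma α₂ / Real.Gamma (α₁ + α₂)) *
      ∫ x in Set.Ioi (0:ℝ), g x * x ^ (α₁ + α₂ - 1) = 1) :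
    (∀ p : ℝ × ℝ, 0 ≤ g (p.1 ^ 2 + p.2 ^ 2) * |p.1| ^ (2 * α₁ - 1) * |p.2| ^ (2 * α₂ - 1)) ∧
    ∫ p : ℝ × ℝ, g (p.1 ^ 2 + p.2 ^ 2) * |p.1| ^ (2 * α₁ - 1) * |p.2| ^ (2 * α₂ - 1) = 1 :=
  ⟨fun p => by have := hg_nonneg (p.1 ^ 2 + p.2 ^ 2); positivity,
    (integral_comp_sq_add_sq_mul_abs_rpow g hα₁ hα₂).trans hnorm⟩

/-- If `g` is a nonnegative density generator normalized so that
`(Γ(α₁)Γ(α₂)/Γ(α₁+α₂)) ∫₀^∞ g(x) x^{α₁+α₂-1} dx = 1`, then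
`h(x₁,x₂) = g(x₁²+x₂²)|x₁|^{2α₁-1}|x₂|^{2α₂-1}` is a probability density on `ℝ²`. -/
theorem dirichlet_density_generator_normalization
    (α₁ α₂ : ℝ) (hα₁ : 0 < α₁) (hα₂ : 0 < α₂)
    (g : ℝ → ℝ) (hg_meas : Measurable g)
    (hg_nonneg : ∀ x, 0 ≤ g x) (hg_pos : ∀ x > (0:ℝ), 0 < g x)
    (hnorm : (Real.Gamma α₁ * Real.Gamma α₂ / Real.Gamma (α₁ + α₂)) *
      ∫ x in Set.Ioi (0:ℝ), g x * x ^ (α₁ + α₂ - 1) = 1) :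
    (∀ p : ℝ × ℝ, 0 ≤ g (p.1 ^ 2 + p.2 ^ 2) * |p.1| ^ (2 * α₁ - 1) * |p.2| ^ (2 * α₂ - 1)) ∧
    ∫ p : ℝ × ℝ, g (p.1 ^ 2 + p.2 ^ 2) * |p.1| ^ (2 * α₁ - 1) * |p.2| ^ (2 * α₂ - 1) = 1 :=
  dirichlet_density_generator_normalization_general α₁ α₂ hα₁ hα₂ g hg_nonneg hnorm
end

section
/- Let w be the scaling function of a distribution F in the Gumbel max-domain of attraction. Then w is self-neglecting: for every x ∈ ℝ, lim_{u→∞} w(u + x/w(u))/w(u) = 1. -/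
/-!
Write `H u = ∫ s in Ioi u, (1 - F s)`, so that `w = (1 - F) / H` and `w (u + x / w u) / w u` is
the Gumbel ratio of `1 - F` divided by `H (u + x / w u) / H u`; it suffices that the latter tends
to `exp (-x)`.

For `x ≥ 0` this follows from
`(H (u + a / w u) - H (u + b / w u)) / H u = ∫ t in a..b, (1 - F (u + t / w u)) / (1 - F u)`
and a Fatou-type lower bound for these integrals. Negative shifts are reduced to positive ones in
the coordinate `W = -log H`: if `W v = W u - y`, the positive-shift limits at the bases `v` and `u`
force `(u - v) * w u → y`, which pins down `W (u + x / w u) - W u`.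
-/

open Filter MeasureTheory Set Topology

theorem tendsto_of_monotone_of_tendsto_apply_self {ι : Type*} {l : Filter ι}
    {φ : ι → ℝ → ℝ} (hφ : ∀ i, Monotone (φ i)) {y : ℝ}
    (hlim : ∀ᶠ s in 𝓝 y, Tendsto (fun i => φ i s) l (𝓝 s)) {t : ι → ℝ}
    (ht : Tendsto (fun i => φ i (t i)) l (𝓝 y)) : Tendsto t l (𝓝 y) := by
  rw [tendsto_order]
  constructor
  · intro c hc
    obtain ⟨s, hs, hcs, hsy⟩ :=
      ((hlim.filter_mono nhdsWithin_le_nhds).and (Ioo_mem_nhdsLT hc)).exists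
    filter_upwards [hs.eventually_lt ht hsy] with i hi
    exact hcs.trans ((hφ i).reflect_lt hi)
  · intro c hc
    obtain ⟨s, hs, hys, hsc⟩ :=
      ((hlim.filter_mono nhdsWithin_le_nhds).and (Ioo_mem_nhdsGT hc)).exists
    filter_upwards [ht.eventually_lt hs hys] with i hi
    exact ((hφ i).reflect_lt hi).trans hsc

theorem eventually_lt_intervalIntegral_of_tendsto {ι : Type*} {l : Filter ι}
    [l.IsCountablyGenerated] {g : ι → ℝ → ℝ} {G : ℝ → ℝ} {a b M c : ℝ} (hab : a ≤ b)
    (hg : ∀ i t, 0 ≤ g i t) (hgi : ∀ i, IntervalIntegrable (g i) volume a b)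
    (hlim : ∀ t, Tendsto (fun i => g i t) l (𝓝 (G t))) (hGM : ∀ t ∈ Ioc a b, G t ≤ M)
    (hc : c < ∫ t in a..b, G t) : ∀ᶠ i in l, c < ∫ t in a..b, g i t := by
  simp only [intervalIntegral.integral_of_le hab] at hc ⊢
  have hmin_meas : ∀ i, AEStronglyMeasurable (fun t => min (g i t) M)
      (volume.restrict (Ioc a b)) :=
    fun i => (hgi i).1.aestronglyMeasurable.inf aestronglyMeasurable_const
  have hmin_bound : ∀ i t, ‖min (g i t) M‖ ≤ |M| := fun i t =>
    abs_le.2 ⟨le_min (by linarith [abs_nonneg M, hg i t]) (neg_abs_le M),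
      (min_le_right _ _).trans (le_abs_self M)⟩
  -- truncating at `M` makes dominated convergence applicable without changing the limit
  have htrunc : Tendsto (fun i => ∫ t in Ioc a b, min (g i t) M) l
      (𝓝 (∫ t in Ioc a b, G t)) := by
    have h := tendsto_integral_filter_of_dominated_convergence (fun _ => |M|)
      (Eventually.of_forall hmin_meas)
      (Eventually.of_forall fun i => ae_of_all _ (hmin_bound i))
      (integrableOn_const measure_Ioc_lt_top.ne)
      (ae_of_all _ fun t => (hlim t).min tendsto_const_nhds)
    rwa [setIntegral_congr_fun measurableSet_Ioc fun t ht => min_eq_left (hGM t ht)] at h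
  filter_upwards [htrunc.eventually_const_lt hc] with i hi
  refine hi.trans_le (setIntegral_mono_on ?_ (hgi i).1 measurableSet_Ioc
    fun t _ => min_le_left _ _)
  exact (integrableOn_const measure_Ioc_lt_top.ne).mono' (hmin_meas i)
    (ae_of_all _ (hmin_bound i))

theorem exists_eventually_eq_sub {W : ℝ → ℝ} (hWc : Continuous W)
    (hWtop : Tendsto W atTop atTop) (y : ℝ) :
    ∃ v : ℝ → ℝ, ∀ᶠ u in atTop, W (v u) = W u - y := by
  have hex : ∀ᶠ u in atTop, ∃ p, W p = W u - y := by
    filter_upwards [hWtop.eventually_ge_atTop (W 0 + y)] with u hu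
    obtain ⟨p, -, hp⟩ := intermediate_value_Ici hWc.continuousOn hWtop
      (show W u - y ∈ Ici (W 0) from le_sub_iff_add_le.2 hu)
    exact ⟨p, hp⟩
  obtain ⟨u₀, hu₀⟩ := eventually_atTop.1 hex
  choose! v hv using hu₀
  exact ⟨v, eventually_atTop.2 ⟨u₀, hv⟩⟩

section SelfNeglecting

variable {W w : ℝ → ℝ}

theorem monotone_shift_sub (hw : ∀ u, 0 < w u) (hW : Monotone W) (u : ℝ) :
    Monotone fun t => W (u + t / w u) - W u := fun _ _ hst =>
  sub_le_sub_right (hW (by have := (hw u).le; gcongr)) _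

variable (hw : ∀ u, 0 < w u) (hW : Monotone W) (hWtop : Tendsto W atTop atTop)
  (hshift : ∀ y, 0 ≤ y → Tendsto (fun u => W (u + y / w u) - W u) atTop (𝓝 y))
include hw hW hWtop hshift

theorem tendsto_sub_mul_of_eventually_eq_sub {y : ℝ} (hy : 0 < y) {v : ℝ → ℝ}
    (hv : ∀ᶠ u in atTop, W (v u) = W u - y) :
    Tendsto (fun u => (u - v u) * w u) atTop (𝓝 y) := by
  have hshift_near : ∀ {z : ℝ}, 0 < z → ∀ᶠ s in 𝓝 z,
      Tendsto (fun u => W (u + s / w u) - W u) atTop (𝓝 s) := fun hz =>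
    Filter.Eventually.mono (Ioi_mem_nhds hz) fun s hs => hshift s hs.le
  have hvtop : Tendsto v atTop atTop := tendsto_atTop.2 fun M => by
    filter_upwards [hv, hWtop.eventually_gt_atTop (W M + y)] with u hvu hu
    exact (hW.reflect_lt (by linarith)).le
  have hgap : Tendsto (fun u => (u - v u) * w (v u)) atTop (𝓝 y) := by
    refine tendsto_of_monotone_of_tendsto_apply_self (fun u => monotone_shift_sub hw hW (v u))
      ((hshift_near hy).mono fun s hs => hs.comp hvtop) (tendsto_const_nhds.congr' ?_)
    filter_upwards [hv] with u hvu
    rw [mul_div_cancel_right₀ _ (hw _).ne', add_sub_cancel, hvu, sub_sub_cancel]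
  -- `v u + (y + 1) / w (v u)` lies one unit of `W` above `u`, i.e. near `u + 1 / w u`
  have hratio : Tendsto (fun u => (y + 1 - (u - v u) * w (v u)) * (w u / w (v u)))
      atTop (𝓝 1) := by
    refine tendsto_of_monotone_of_tendsto_apply_self (fun u => monotone_shift_sub hw hW u)
      (hshift_near one_pos) ?_
    have h := ((hshift (y + 1) (by linarith)).comp hvtop).sub_const y
    rw [add_sub_cancel_left] at h
    refine h.congr' ?_
    filter_upwards [hv] with u hvu
    have hpt : u + (y + 1 - (u - v u) * w (v u)) * (w u / w (v u)) / w u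
        = v u + (y + 1) / w (v u) := by
      field_simp [(hw u).ne', (hw (v u)).ne']
      ring
    simp only [Function.comp_apply, hpt, hvu]
    ring
  have hw_ratio : Tendsto (fun u => w u / w (v u)) atTop (𝓝 1) := by
    have h := hratio.div ((tendsto_const_nhds (x := y + 1)).sub hgap) (by simp)
    rw [add_sub_cancel_left, div_one] at h
    refine h.congr' ?_
    filter_upwards [hgap.eventually_lt_const (lt_add_one y)] with u hu
    exact mul_div_cancel_left₀ _ (by linarith : (0 : ℝ) < _).ne'
  have h := hgap.mul hw_ratio
  rw [mul_one] at h
  refine h.congr fun u => ?_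
  rw [mul_assoc, mul_div_cancel₀ _ (hw _).ne']

theorem tendsto_shift_sub (hWc : Continuous W) (x : ℝ) :
    Tendsto (fun u => W (u + x / w u) - W u) atTop (𝓝 x) := by
  rcases le_or_gt 0 x with hx | hx
  · exact hshift x hx
  rw [tendsto_order]
  constructor
  · intro c hc
    obtain ⟨y, hxy, hyc⟩ : ∃ y, -x < y ∧ y < -c := exists_between (by linarith)
    obtain ⟨v, hv⟩ := exists_eventually_eq_sub hWc hWtop y
    have hgap := tendsto_sub_mul_of_eventually_eq_sub hw hW hWtop hshift (by linarith) hv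
    filter_upwards [hv, hgap.eventually_const_lt hxy] with u hvu hu
    have hvx : v u ≤ u + x / w u := by
      have := (div_lt_iff₀ (hw u)).2 hu
      rw [neg_div] at this
      linarith
    linarith [hW hvx]
  · intro c hc
    obtain ⟨y, hcy, hyx⟩ : ∃ y, max 0 (-c) < y ∧ y < -x :=
      exists_between (max_lt (by linarith) (by linarith))
    obtain ⟨v, hv⟩ := exists_eventually_eq_sub hWc hWtop y
    have hgap := tendsto_sub_mul_of_eventually_eq_sub hw hW hWtop hshift
      ((le_max_left _ _).trans_lt hcy) hv
    filter_upwards [hv, hgap.eventually_lt_const hyx] with u hvu hu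
    have hvx : u + x / w u ≤ v u := by
      have := (lt_div_iff₀ (hw u)).2 hu
      rw [neg_div] at this
      linarith
    linarith [hW hvx, le_max_right 0 (-c)]

end SelfNeglecting

theorem tendsto_shift_div {H w : ℝ → ℝ} (hw : ∀ u, 0 < w u) (hH : ∀ u, 0 < H u)
    (hHa : Antitone H) (hHc : Continuous H) (hH0 : Tendsto H atTop (𝓝 0))
    (hshift : ∀ y, 0 ≤ y → Tendsto (fun u => H (u + y / w u) / H u) atTop
      (𝓝 (Real.exp (-y)))) (x : ℝ) :
    Tendsto (fun u => H (u + x / w u) / H u) atTop (𝓝 (Real.exp (-x))) := by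
  set W := fun u => -Real.log (H u) with hWdef
  have hdiv : ∀ a b, H a / H b = Real.exp (-(W a - W b)) := fun a b => by
    rw [hWdef, neg_sub, sub_neg_eq_add, neg_add_eq_sub, Real.exp_sub, Real.exp_log (hH a),
      Real.exp_log (hH b)]
  have hW : Monotone W := fun a b hab => neg_le_neg (Real.log_le_log (hH b) (hHa hab))
  have hWc : Continuous W := (hHc.log fun u => (hH u).ne').neg
  have hWtop : Tendsto W atTop atTop := tendsto_neg_atBot_atTop.comp
    (Real.tendsto_log_nhdsGT_zero.comp (tendsto_nhdsWithin_iff.2 ⟨hH0, Eventually.of_forall hH⟩))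
  have hWshift : ∀ y, 0 ≤ y → Tendsto (fun u => W (u + y / w u) - W u) atTop (𝓝 y) :=
    fun y hy => by
      have h := ((hshift y hy).log (Real.exp_pos _).ne').neg
      simpa only [hdiv, Real.log_exp, neg_neg] using h
  simp only [hdiv]
  exact (Real.continuous_exp.tendsto _).comp ((tendsto_shift_sub hw hW hWtop hWshift hWc x).neg)

section IntegratedTail

variable {f : ℝ → ℝ}

theorem integral_Ioi_pos (hf : ∀ s, 0 < f s) {u : ℝ} (hfi : IntegrableOn f (Ioi u)) :
    0 < ∫ s in Ioi u, f s := by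
  rw [setIntegral_pos_iff_support_of_nonneg_ae (ae_of_all _ fun s => (hf s).le) hfi]
  simp [Function.support_eq_univ fun s => (hf s).ne']

theorem antitone_integral_Ioi (hf : ∀ s, 0 ≤ f s) (hfi : ∀ u, IntegrableOn f (Ioi u)) :
    Antitone fun u => ∫ s in Ioi u, f s := fun a _ hab =>
  setIntegral_mono_set (hfi a) (ae_of_all _ hf) (Ioi_subset_Ioi hab).eventuallyLE

theorem continuous_integral_Ioi (hfi : ∀ u, IntegrableOn f (Ioi u)) :
    Continuous fun u => ∫ s in Ioi u, f s :=
  continuous_iff_continuousAt.2 fun u => (hfi (u - 1)).continuousOn_Ici_primitive_Ioi.continuousAt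
    (Ici_mem_nhds (sub_one_lt u))

theorem intervalIntegrable_comp_add_div (hfi : ∀ u, IntegrableOn f (Ioi u)) (u : ℝ) {c : ℝ}
    (hc : c ≠ 0) (a b : ℝ) : IntervalIntegrable (fun t => f (u + t / c)) volume a b := by
  have hf : IntervalIntegrable f volume (u + a / c) (u + b / c) :=
    intervalIntegrable_iff.2 ((hfi _).mono_set Ioc_subset_Ioi_self)
  have h := (hf.comp_add_left u).comp_mul_left (c := c⁻¹)
  simp only [add_sub_cancel_left, div_inv_eq_mul, div_mul_cancel₀ _ hc] at h
  simpa only [div_eq_inv_mul] using h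

variable {w : ℝ → ℝ} (hf : ∀ s, 0 < f s) (hfi : ∀ u, IntegrableOn f (Ioi u))
  (hw : ∀ u, w u = f u / ∫ s in Ioi u, f s)
include hf hfi hw

theorem ne_zero_of_eq_div_integral_Ioi (u : ℝ) : w u ≠ 0 := by
  rw [hw]
  exact div_ne_zero (hf u).ne' (integral_Ioi_pos hf (hfi u)).ne'

theorem integral_Ioi_shift_sub_div_eq (u a b : ℝ) :
    ((∫ s in Ioi (u + a / w u), f s) - ∫ s in Ioi (u + b / w u), f s) / ∫ s in Ioi u, f s
      = ∫ t in a..b, f (u + t / w u) / f u := by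
  rw [intervalIntegral.integral_Ioi_sub_Ioi' (hfi _) (hfi _), intervalIntegral.integral_div,
    intervalIntegral.integral_comp_add_div _ (ne_zero_of_eq_div_integral_Ioi hf hfi hw u),
    smul_eq_mul, hw u]
  field_simp [(hf u).ne', (integral_Ioi_pos hf (hfi u)).ne']

theorem tendsto_integral_Ioi_shift_div {y : ℝ} (hy : 0 ≤ y)
    (hlim : ∀ x, Tendsto (fun u => f (u + x / w u) / f u) atTop (𝓝 (Real.exp (-x)))) :
    Tendsto (fun u => (∫ s in Ioi (u + y / w u), f s) / ∫ s in Ioi u, f s) atTop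
      (𝓝 (Real.exp (-y))) := by
  have hlow : ∀ a b, a ≤ b → ∀ c < Real.exp (-a) - Real.exp (-b), ∀ᶠ u in atTop,
      c < ((∫ s in Ioi (u + a / w u), f s) - ∫ s in Ioi (u + b / w u), f s) /
        ∫ s in Ioi u, f s := by
    intro a b hab c hc
    simp only [integral_Ioi_shift_sub_div_eq hf hfi hw]
    refine eventually_lt_intervalIntegral_of_tendsto hab
      (fun u t => div_nonneg (hf _).le (hf _).le)
      (fun u => (intervalIntegrable_comp_add_div hfi u
        (ne_zero_of_eq_div_integral_Ioi hf hfi hw u) a b).div_const _) hlim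
      (fun t ht => Real.exp_le_exp.2 (neg_le_neg ht.1.le)) ?_
    simpa using hc
  rw [tendsto_order]
  constructor
  · intro c hc
    obtain ⟨z, hz, hyz⟩ := ((Real.tendsto_exp_neg_atTop_nhds_zero.eventually_lt_const
      (sub_pos.2 hc)).and (eventually_ge_atTop y)).exists
    filter_upwards [hlow y z hyz c (by linarith)] with u hu
    have := div_nonneg (integral_Ioi_pos hf (hfi (u + z / w u))).le
      (integral_Ioi_pos hf (hfi u)).le
    rw [sub_div] at hu
    linarith
  · intro c hc
    filter_upwards [hlow 0 y hy (1 - c) (by rw [neg_zero, Real.exp_zero]; linarith)] with u hu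
    rw [sub_div, zero_div, add_zero, div_self (integral_Ioi_pos hf (hfi u)).ne'] at hu
    linarith

end IntegratedTail

theorem gumbel_mda_scaling_self_neglecting_general
    (F w : ℝ → ℝ)
    (hw : ∀ u, 0 < w u)
    (hF_pos : ∀ u, 0 < 1 - F u)
    (hw_canonical : ∀ u, w u = (1 - F u) / ∫ s in Set.Ioi u, (1 - F s))
    (hGumbel : ∀ x : ℝ,
      Tendsto (fun u => (1 - F (u + x / w u)) / (1 - F u)) atTop (nhds (Real.exp (-x)))) :
    ∀ x : ℝ, Tendsto (fun u => w (u + x / w u) / w u) atTop (nhds 1) := by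
  intro x
  have hint : ∀ u, IntegrableOn (fun s => 1 - F s) (Ioi u) := fun u => by
    by_contra h
    have := hw u
    rw [hw_canonical, integral_undef h, div_zero] at this
    exact this.false
  have hH := tendsto_shift_div hw (fun u => integral_Ioi_pos hF_pos (hint u))
    (antitone_integral_Ioi (fun s => (hF_pos s).le) hint) (continuous_integral_Ioi hint)
    (tendsto_integral_Ioi_zero tendsto_id)
    (fun y hy => tendsto_integral_Ioi_shift_div hF_pos hint hw_canonical hy hGumbel) x
  have h := (hGumbel x).div hH (Real.exp_pos _).ne'
  rw [div_self (Real.exp_pos _).ne'] at h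
  refine h.congr fun u => ?_
  rw [Pi.div_apply]
  generalize u + x / w u = p
  rw [hw_canonical p, hw_canonical u]
  field_simp [(integral_Ioi_pos hF_pos (hint p)).ne']

/-- The scaling function `w` of a distribution `F` in the Gumbel max-domain of attraction
is self-neglecting: for every `x`, `w(u + x/w(u))/w(u) → 1` as `u → ∞`. -/
theorem gumbel_mda_scaling_self_neglecting
    (F w : ℝ → ℝ)
    (hw : ∀ u, 0 < w u) (hw_meas : Measurable w)
    (hF_pos : ∀ u, 0 < 1 - F u)
    (hw_canonical : ∀ u, w u = (1 - F u) / ∫ s in Set.Ioi u, (1 - F s))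
    (hGumbel : ∀ x : ℝ,
      Tendsto (fun u => (1 - F (u + x / w u)) / (1 - F u)) atTop (nhds (Real.exp (-x)))) :
    ∀ x : ℝ, Tendsto (fun u => w (u + x / w u) / w u) atTop (nhds 1) :=
  gumbel_mda_scaling_self_neglecting_general F w hw hF_pos hw_canonical hGumbel
end
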